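/- arXiv:1511.08147 — 3 statements merged into one kernel-verified Lean document; each statement's English description precedes it below -/
import Mathlib

section
/- The function v : ℕ → ℤ defined for n ≥ 1 by v(n) = s₂(n) − s₂(n−1) is multiplicative: v(1) = 1 and v(mn) = v(m)·v(n) whenever gcd(m,n) = 1. -/
def s2 (n : ℕ) : ℕ := (Nat.digits 2 n).sum

def v (n : ℕ) : ℤ := (s2 n : ℤ) - (s2 (n - 1) : ℤ)

lemma s2_two_mul (n : ℕ) : s2 (2 * n) = s2 n := by
  rcases Nat.eq_zero_or_pos n with h | h
  · simp [h]
  · unfold s2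
    rw [Nat.digits_def' (by norm_num : 1 < 2) (by omega)]
    simp [Nat.mul_div_cancel_left, Nat.mul_mod_right]

lemma s2_two_mul_add_one (n : ℕ) : s2 (2 * n + 1) = s2 n + 1 := by
  unfold s2
  rw [Nat.digits_def' (by norm_num : 1 < 2) (by omega)]
  have h1 : (2 * n + 1) % 2 = 1 := by omega
  have h2 : (2 * n + 1) / 2 = n := by omega
  rw [h1, h2]
  simp [Nat.add_comm]

lemma s2_pow_mul (k q : ℕ) : s2 (2 ^ k * q) = s2 q := by
  induction k with
  | zero => simp
  | succ k ih =>
    have : 2 ^ (k + 1) * q = 2 * (2 ^ k * q) := by ring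
    rw [this, s2_two_mul, ih]

lemma s2_pow_mul_sub_one (k q : ℕ) (hq : 1 ≤ q) :
    s2 (2 ^ k * q - 1) = s2 (q - 1) + k := by
  induction k with
  | zero => simp
  | succ k ih =>
    have hpos : 1 ≤ 2 ^ k * q := Nat.one_le_iff_ne_zero.mpr (by positivity)
    have : 2 ^ (k + 1) * q - 1 = 2 * (2 ^ k * q - 1) + 1 := by
      have : 2 ^ (k + 1) * q = 2 * (2 ^ k * q) := by ring
      omega
    rw [this, s2_two_mul_add_one, ih]; omega

lemma s2_odd (q : ℕ) (hq : Odd q) : s2 q = s2 (q - 1) + 1 := by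
  obtain ⟨j, rfl⟩ := hq
  have : 2 * j + 1 - 1 = 2 * j := by omega
  rw [this, s2_two_mul_add_one, s2_two_mul]

lemma v_eq (n : ℕ) (hn : 1 ≤ n) : v n = 1 - (n.factorization 2 : ℤ) := by
  set k := n.factorization 2 with hk
  have hmul : 2 ^ k * (n / 2 ^ k) = n := Nat.ordProj_mul_ordCompl_eq_self n 2
  set q := n / 2 ^ k with hq
  have hqpos : 0 < q := Nat.ordCompl_pos 2 (by omega)
  have hodd : Odd q := by
    rw [Nat.odd_iff, ← Nat.two_dvd_ne_zero]
    exact Nat.not_dvd_ordCompl Nat.prime_two (by omega)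
  have h1 : s2 n = s2 q := by rw [← hmul]; exact s2_pow_mul k q
  have h2 : s2 (n - 1) = s2 (q - 1) + k := by
    rw [← hmul]; exact s2_pow_mul_sub_one k q hqpos
  unfold v
  rw [h1, h2, s2_odd q hodd]
  push_cast
  ring

theorem stmt6 : v 1 = 1 ∧ ∀ m n : ℕ, 1 ≤ m → 1 ≤ n → Nat.Coprime m n →
    v (m * n) = v m * v n := by
  constructor
  · simp [v, s2]
  · intro m n hm hn hco
    have hm0 : m ≠ 0 := by omega
    have hn0 : n ≠ 0 := by omega
    have hfac : (m * n).factorization 2 = m.factorization 2 + n.factorization 2 := by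
      rw [Nat.factorization_mul hm0 hn0]; rfl
    have hzero : m.factorization 2 = 0 ∨ n.factorization 2 = 0 := by
      by_contra h
      push_neg at h
      have h1 : 2 ∣ m := Nat.dvd_of_factorization_pos h.1
      have h2 : 2 ∣ n := Nat.dvd_of_factorization_pos h.2
      have : 2 ∣ Nat.gcd m n := Nat.dvd_gcd h1 h2
      rw [hco.gcd_eq_one] at this
      omega
    rw [v_eq m hm, v_eq n hn, v_eq (m * n) (Nat.one_le_iff_ne_zero.mpr (Nat.mul_ne_zero hm0 hn0)), hfac]
    rcases hzero with h | h <;> rw [h] <;> push_cast <;> ring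
end

section
/- For every integer b ≥ 2, ∑_{n≥0} s₂(n)/b^n = (b/(b−1)) · ∑_{n≥0} (1/b^{2^n})/(1 + 1/b^{2^n}), i.e., S(1/b) = b/(b−1) · F(1/b), where S(x) = ∑ s₂(n)x^n and F(x) = ∑_{n≥0} x^{2^n}/(1+x^{2^n}). -/
lemma s2_rec (n : ℕ) (hn : 0 < n) : s2 n = n % 2 + s2 (n / 2) := by
  unfold s2
  rw [Nat.digits_def' (by norm_num : 1 < 2) hn]
  simp

lemma s2_eq_sum_bits : ∀ m n, n < 2 ^ m → s2 n = ∑ k ∈ Finset.range m, (n.testBit k).toNat := by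
  intro m
  induction m with
  | zero => intro n hn; interval_cases n; simp [s2]
  | succ m ih =>
    intro n hn
    rcases Nat.eq_zero_or_pos n with h0 | h0
    · subst h0; simp [s2]
    · rw [s2_rec n h0, Finset.sum_range_succ']
      have h2 : n / 2 < 2 ^ m := by
        rw [pow_succ] at hn; omega
      have hb0 : (n.testBit 0).toNat = n % 2 := by
        rw [Nat.testBit_zero]
        rcases Nat.mod_two_eq_zero_or_one n with h | h <;> simp [h]
      simp only [Nat.testBit_succ, hb0]
      rw [← ih _ h2]
      omega

lemma s2_le : ∀ n, s2 n ≤ n := by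
  intro n
  induction n using Nat.strong_induction_on with
  | _ n ih =>
    rcases Nat.eq_zero_or_pos n with h0 | h0
    · subst h0; simp [s2]
    · rw [s2_rec n h0]
      have := ih (n / 2) (by omega)
      omega

lemma tsum_bits (x : ℝ) (n : ℕ) :
    ∑' k : ℕ, (if n.testBit k then x ^ n else 0) = (s2 n : ℝ) * x ^ n := by
  rw [tsum_eq_sum (s := Finset.range (n + 1))
    (by
      intro k hk
      simp only [Finset.mem_range] at hk
      have : n < 2 ^ k := lt_of_lt_of_le (by omega) (Nat.lt_two_pow_self (n := k)).le
      simp [Nat.testBit_lt_two_pow this])]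
  rw [s2_eq_sum_bits (n + 1) n (lt_trans (Nat.lt_two_pow_self (n := n)) (by
    exact Nat.pow_lt_pow_succ (by norm_num)))]
  push_cast
  rw [Finset.sum_mul]
  exact Finset.sum_congr rfl fun k _ => by by_cases h : n.testBit k <;> simp [h]

lemma testBit_mul_add (q r k : ℕ) (hr : r < 2 ^ (k + 1)) :
    (q * 2 ^ (k + 1) + r).testBit k = r.testBit k := by
  rw [Nat.testBit_eq_decide_div_mod_eq, Nat.testBit_eq_decide_div_mod_eq]
  have hp : 0 < 2 ^ k := Nat.pow_pos (by norm_num)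
  have hdiv : (q * 2 ^ (k + 1) + r) / 2 ^ k = r / 2 ^ k + q * 2 := by
    rw [pow_succ]
    rw [show q * (2 ^ k * 2) + r = r + q * 2 * 2 ^ k by ring]
    rw [Nat.add_mul_div_right _ _ hp]
  rw [hdiv, Nat.add_mul_mod_self_right]

lemma testBit_iff_ge (r k : ℕ) (hr : r < 2 ^ (k + 1)) :
    r.testBit k = true ↔ 2 ^ k ≤ r := by
  rw [Nat.testBit_eq_decide_div_mod_eq]
  have hp : 0 < 2 ^ k := Nat.pow_pos (by norm_num)
  rw [pow_succ] at hr
  have h2 : r / 2 ^ k < 2 := Nat.div_lt_of_lt_mul (by omega)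
  have h3 : (r / 2 ^ k = 1) ↔ 2 ^ k ≤ r := by
    constructor
    · intro h
      have := Nat.div_mul_le_self r (2 ^ k)
      nlinarith [Nat.div_mul_le_self r (2 ^ k)]
    · intro h
      have : 1 ≤ r / 2 ^ k := (Nat.one_le_div_iff hp).mpr h
      omega
  rw [Nat.mod_eq_of_lt h2]
  simp only [decide_eq_true_eq]
  exact h3

lemma column_sum (x : ℝ) (hx0 : 0 < x) (hx1 : x < 1) (k : ℕ) :
    ∑' n : ℕ, (if n.testBit k then x ^ n else 0)
      = x ^ (2 ^ k) / ((1 + x ^ (2 ^ k)) * (1 - x)) := by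
  set m := 2 ^ (k + 1) with hm
  have hmpos : 0 < m := Nat.pow_pos (by norm_num)
  haveI : NeZero m := ⟨hmpos.ne'⟩
  set g : ℕ → ℝ := fun n => if n.testBit k then x ^ n else 0 with hg
  have he := ((Nat.divModEquiv m).symm.tsum_eq g).symm
  rw [he]
  have hterm : ∀ p : ℕ × Fin m, g ((Nat.divModEquiv m).symm p)
      = (x ^ m) ^ p.1 * (if (p.2 : ℕ).testBit k then x ^ (p.2 : ℕ) else 0) := by
    rintro ⟨q, r⟩
    simp only [Nat.divModEquiv, Equiv.coe_fn_symm_mk, hg]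
    rw [testBit_mul_add q r k r.is_lt]
    by_cases h : (r : ℕ).testBit k
    · simp only [h, if_true]
      rw [pow_add, pow_mul]
      ring
    · simp [h]
  rw [tsum_congr hterm]
  have hy0 : 0 ≤ x ^ m := le_of_lt (pow_pos hx0 m)
  have hy1 : x ^ m < 1 := pow_lt_one₀ hx0.le hx1 hmpos.ne'
  have hsf : Summable fun q : ℕ => (x ^ m) ^ q := summable_geometric_of_lt_one hy0 hy1
  have hsg : Summable fun r : Fin m => (if (r : ℕ).testBit k then x ^ (r : ℕ) else 0) :=
    summable_of_finite_support (Set.toFinite _)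
  have hprod : Summable fun p : ℕ × Fin m =>
      (x ^ m) ^ p.1 * (if (p.2 : ℕ).testBit k then x ^ (p.2 : ℕ) else 0) := by
    apply hsf.mul_of_nonneg hsg
    · intro q; positivity
    · intro r; dsimp only; split <;> positivity
  rw [← Summable.tsum_mul_tsum hsf hsg hprod]
  rw [tsum_geometric_of_lt_one hy0 hy1, tsum_fintype]
  have hfin : ∑ r : Fin m, (if (r : ℕ).testBit k then x ^ (r : ℕ) else 0)
      = ∑ r ∈ Finset.Ico (2 ^ k) m, x ^ r := by
    rw [Fin.sum_univ_eq_sum_range (fun r => if Nat.testBit r k then x ^ r else 0) m]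
    rw [← Finset.sum_filter]
    congr 1
    ext r
    simp only [Finset.mem_filter, Finset.mem_range, Finset.mem_Ico]
    constructor
    · rintro ⟨h1, h2⟩; exact ⟨(testBit_iff_ge r k h1).mp h2, h1⟩
    · rintro ⟨h1, h2⟩; exact ⟨h2, (testBit_iff_ge r k h2).mpr h1⟩
  rw [hfin, geom_sum_Ico hx1.ne (Nat.pow_le_pow_right (by norm_num) k.le_succ)]
  set t := x ^ (2 ^ k) with ht
  have hmt : x ^ m = t * t := by
    rw [ht, hm, ← pow_add]
    congr 1
    rw [pow_succ]; ring
  have ht0 : 0 < t := pow_pos hx0 _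
  have ht1 : t < 1 := pow_lt_one₀ hx0.le hx1 (Nat.pow_pos (by norm_num)).ne'
  rw [hmt]
  have h1 : (1 : ℝ) - t * t ≠ 0 := by nlinarith
  have h2 : x - 1 ≠ 0 := by linarith
  have h3 : (1 : ℝ) + t ≠ 0 := by linarith
  have h4 : (1 : ℝ) - x ≠ 0 := by linarith
  have h1' : (1 : ℝ) - t ^ 2 ≠ 0 := by nlinarith
  field_simp
  ring

lemma full_summable (x : ℝ) (hx0 : 0 < x) (hx1 : x < 1) :
    Summable fun p : ℕ × ℕ => (if p.1.testBit p.2 then x ^ p.1 else 0) := by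
  rw [summable_prod_of_nonneg (by intro p; dsimp only; split <;> positivity)]
  constructor
  · intro n
    apply summable_of_ne_finset_zero (s := Finset.range (n + 1))
    intro k hk
    simp only [Finset.mem_range] at hk
    have : n < 2 ^ k := lt_of_lt_of_le (by omega) (Nat.lt_two_pow_self (n := k)).le
    simp [Nat.testBit_lt_two_pow this]
  · simp only [tsum_bits]
    have hs : Summable (fun n : ℕ => (n : ℝ) * x ^ n) := by
      have := summable_pow_mul_geometric_of_norm_lt_one 1
        (r := x) (by rw [Real.norm_eq_abs, abs_of_pos hx0]; exact hx1)
      simpa using this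
    refine Summable.of_nonneg_of_le
      (fun n => mul_nonneg (Nat.cast_nonneg _) (pow_nonneg hx0.le n)) (fun n => ?_) hs
    apply mul_le_mul_of_nonneg_right _ (le_of_lt (pow_pos hx0 n))
    exact_mod_cast s2_le n

lemma main_x (x : ℝ) (hx0 : 0 < x) (hx1 : x < 1) :
    ∑' n : ℕ, (s2 n : ℝ) * x ^ n
      = (1 / (1 - x)) * ∑' k : ℕ, x ^ (2 ^ k) / (1 + x ^ (2 ^ k)) := by
  have hfs := full_summable x hx0 hx1
  have h1 : ∑' n : ℕ, (s2 n : ℝ) * x ^ n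
      = ∑' (n : ℕ) (k : ℕ), (if n.testBit k then x ^ n else 0) := by
    exact tsum_congr fun n => (tsum_bits x n).symm
  rw [h1]
  have hfs' : Summable (Function.uncurry fun n k : ℕ => (if n.testBit k then x ^ n else 0)) := hfs
  rw [← Summable.tsum_comm (f := fun n k : ℕ => (if n.testBit k then x ^ n else 0)) hfs']
  have h2 : ∀ k : ℕ, ∑' n : ℕ, (if n.testBit k then x ^ n else 0)
      = (1 / (1 - x)) * (x ^ (2 ^ k) / (1 + x ^ (2 ^ k))) := by
    intro k
    rw [column_sum x hx0 hx1 k]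
    rw [div_mul_eq_div_div]
    ring
  rw [tsum_congr h2, tsum_mul_left]

theorem stmt10 : ∀ b : ℕ, 2 ≤ b →
    ∑' n : ℕ, (s2 n : ℝ) / (b : ℝ) ^ n =
      ((b : ℝ) / ((b : ℝ) - 1)) *
        ∑' n : ℕ, (1 / (b : ℝ) ^ (2 ^ n)) / (1 + 1 / (b : ℝ) ^ (2 ^ n)) := by
  intro b hb
  have hb2 : (2 : ℝ) ≤ (b : ℝ) := by exact_mod_cast hb
  have hbpos : (0 : ℝ) < (b : ℝ) := by linarith
  set x : ℝ := 1 / (b : ℝ) with hx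
  have hx0 : 0 < x := by positivity
  have hx1 : x < 1 := by
    rw [hx, div_lt_one hbpos]; linarith
  have hxp : ∀ m : ℕ, x ^ m = 1 / (b : ℝ) ^ m := by
    intro m; rw [hx, div_pow, one_pow]
  have hL : ∀ n : ℕ, (s2 n : ℝ) / (b : ℝ) ^ n = (s2 n : ℝ) * x ^ n := by
    intro n; rw [hxp n]; ring
  rw [tsum_congr hL, main_x x hx0 hx1]
  have hc : 1 / (1 - x) = (b : ℝ) / ((b : ℝ) - 1) := by
    rw [hx]
    field_simp
  rw [hc]
  congr 1
  exact tsum_congr fun n => by rw [hxp]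
end

section
/- For every integer b ≥ 2, the number F(1/b) = ∑_{n≥0} (1/b^{2^n})/(1 + 1/b^{2^n}) is irrational. -/
theorem stmt13 : ∀ b : ℕ, 2 ≤ b →
    Irrational (∑' n : ℕ, (1 / (b : ℝ) ^ (2 ^ n)) / (1 + 1 / (b : ℝ) ^ (2 ^ n))) := by
  intro b hb
  have hb1 : (1:ℝ) < (b:ℝ) := by exact_mod_cast lt_of_lt_of_le one_lt_two hb
  have hb0 : (0:ℝ) < (b:ℝ) := lt_trans one_pos hb1
  set f : ℕ → ℝ := fun n => 1 / ((b:ℝ) ^ (2^n) + 1) with hfdef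
  have hxpos : ∀ n : ℕ, (0:ℝ) < (b:ℝ) ^ (2^n) := fun n => pow_pos hb0 _
  have hre : ∀ n : ℕ, (1 / (b : ℝ) ^ (2 ^ n)) / (1 + 1 / (b : ℝ) ^ (2 ^ n)) = f n := by
    intro n
    have h1 := (hxpos n).ne'
    have h2 : ((b:ℝ) ^ (2^n) + 1) ≠ 0 := by positivity
    simp only [hfdef]
    field_simp
  rw [tsum_congr hre]
  -- positivity and summability
  have hfpos : ∀ n, 0 < f n := by
    intro n
    have := hxpos n
    positivity
  have hfle : ∀ n : ℕ, f n ≤ (1/2 : ℝ)^n := by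
    intro n
    have h2n : (2:ℝ)^n ≤ (b:ℝ)^(2^n) + 1 := by
      calc (2:ℝ)^n ≤ (2:ℝ)^(2^n) := by
            apply pow_le_pow_right₀ one_le_two (Nat.le_of_lt (Nat.lt_two_pow_self (n := n)))
        _ ≤ (b:ℝ)^(2^n) := by
            apply pow_le_pow_left₀ (by norm_num)
            exact_mod_cast hb
        _ ≤ (b:ℝ)^(2^n) + 1 := by linarith
    have heq : (1/2:ℝ)^n = 1/(2:ℝ)^n := by rw [div_pow, one_pow]
    rw [heq]
    simp only [hfdef]
    exact one_div_le_one_div_of_le (by positivity) h2n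
  have hf : Summable f := by
    apply Summable.of_nonneg_of_le (fun n => (hfpos n).le) hfle
    exact summable_geometric_of_lt_one (by norm_num) (by norm_num)
  -- suppose rational
  rintro ⟨r, hr⟩
  set q : ℕ := r.den with hqdef
  have hq0 : 0 < q := r.pos
  set K : ℕ := q + 2 with hKdef
  set B : ℕ := b ^ (2^K) with hBdef
  -- B is large
  have hB4 : 4 ≤ B := by
    calc 4 = 2^2 := rfl
    _ ≤ 2^(2^K) := Nat.pow_le_pow_right (by norm_num) (by
        calc 2 ≤ K := by omega
        _ ≤ 2^K := Nat.le_of_lt (Nat.lt_two_pow_self (n := K)))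
    _ ≤ b^(2^K) := Nat.pow_le_pow_left hb _
  have hBq : 2*q + 2 ≤ B := by
    have h1 : q + 2 ≤ 2^K := Nat.le_of_lt (Nat.lt_two_pow_self (n := K))
    have h3 : 2^(q+2) ≤ 2^(2^K) := Nat.pow_le_pow_right (by norm_num) h1
    have h4 : 2^(2^K) ≤ B := Nat.pow_le_pow_left hb _
    have h5 : 2*q + 2 ≤ 2^(q+2) := by
      have h6 := Nat.lt_two_pow_self (n := q)
      calc 2*q + 2 ≤ 4*(q+1) := by omega
      _ = 2^2 * (q+1) := by norm_num
      _ ≤ 2^2 * 2^q := by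
          apply Nat.mul_le_mul_left
          omega
      _ = 2^(q+2) := by ring
    omega
  -- divisibility
  have hdvd : ∀ n, n < K → (b ^ 2 ^ n + 1) ∣ (B - 1) := by
    intro n hn
    have hx1' : 1 ≤ b ^ 2 ^ n := Nat.one_le_pow _ _ (by omega)
    have e1 : (b ^ 2 ^ n + 1) ∣ (b ^ (2 ^ (n+1)) - 1) := by
      have hsq : b ^ (2 ^ (n+1)) = (b ^ (2^n)) * (b ^ (2^n)) := by
        rw [← pow_add]
        congr 1
        rw [pow_succ]
        ring
      refine ⟨b ^ 2 ^ n - 1, ?_⟩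
      rw [hsq]
      have h2 : 1 ≤ (b ^ 2 ^ n) * (b ^ 2 ^ n) := Nat.one_le_iff_ne_zero.mpr (by positivity)
      zify [hx1', h2] <;> ring
    have e2 : (b ^ (2 ^ (n+1)) - 1) ∣ (B - 1) := by
      have hKe : (2:ℕ)^K = 2^(n+1) * 2^(K-(n+1)) := by
        rw [← pow_add]
        congr 1
        omega
      have hBe : B = (b ^ (2^(n+1))) ^ (2^(K-(n+1))) := by
        rw [hBdef, hKe, pow_mul]
      rw [hBe]
      have := Nat.sub_dvd_pow_sub_pow (b ^ (2 ^ (n+1))) 1 (2 ^ (K - (n+1)))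
      simpa using this
    exact e1.trans e2
  -- real cast facts
  have hBR : ((B:ℝ)) = (b:ℝ)^(2^K) := by rw [hBdef]; push_cast; ring
  have hBR4 : (4:ℝ) ≤ (B:ℝ) := by exact_mod_cast hB4
  have hB1 : (1:ℕ) ≤ B := by omega
  have hBsub : ((B - 1 : ℕ) : ℝ) = (B:ℝ) - 1 := by
    push_cast [Nat.cast_sub hB1]
    ring
  -- partial sum is integer after multiplying by B-1
  set S : ℕ := ∑ n ∈ Finset.range K, (B - 1) / (b ^ 2 ^ n + 1) with hSdef
  have hS : ((B:ℝ) - 1) * (∑ n ∈ Finset.range K, f n) = (S:ℝ) := by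
    rw [hSdef, Finset.mul_sum, Nat.cast_sum]
    apply Finset.sum_congr rfl
    intro n hn
    rw [Finset.mem_range] at hn
    have hd := hdvd n hn
    have hne : ((b ^ 2 ^ n + 1 : ℕ) : ℝ) ≠ 0 := by positivity
    rw [Nat.cast_div hd hne, hBsub]
    simp only [hfdef]
    push_cast
    have hne' : ((b:ℝ) ^ 2 ^ n + 1) ≠ 0 := by
      have := hxpos n
      positivity
    field_simp
  -- tail bound
  set T : ℝ := ∑' n : ℕ, f (n + (K+1)) with hTdef
  have hsplit : (∑' n, f n) = (∑ n ∈ Finset.range (K+1), f n) + T := by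
    rw [hTdef]
    exact (hf.sum_add_tsum_nat_add (K+1)).symm
  have hT0 : 0 ≤ T := tsum_nonneg (fun n => (hfpos _).le)
  have hBpos : (0:ℝ) < (B:ℝ) := by linarith
  have hBinv0 : (0:ℝ) ≤ (B:ℝ)⁻¹ := by positivity
  have hBinv1 : (B:ℝ)⁻¹ < 1 := by
    rw [inv_lt_one_iff₀]
    right
    linarith
  have hgeo : Summable (fun n : ℕ => ((B:ℝ)⁻¹)^n) := summable_geometric_of_lt_one hBinv0 hBinv1
  have hg : Summable (fun n : ℕ => ((B:ℝ)⁻¹)^(n+2)) := by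
    have := hgeo.mul_right (((B:ℝ)⁻¹)^2)
    simpa [pow_add] using this
  have hterm : ∀ n : ℕ, f (n + (K+1)) ≤ ((B:ℝ)⁻¹)^(n+2) := by
    intro n
    have hexp : 2^K * (n+2) ≤ 2^(n + (K+1)) := by
      have h1 : n + 2 ≤ 2^(n+1) := Nat.lt_two_pow_self (n := n+1)
      calc 2^K * (n+2) ≤ 2^K * 2^(n+1) := Nat.mul_le_mul_left _ h1
      _ = 2^(n + (K+1)) := by
          rw [← pow_add]
          congr 1
          omega
    have hpow : ((B:ℝ))^(n+2) ≤ (b:ℝ)^(2^(n+(K+1))) := by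
      rw [hBR, ← pow_mul]
      exact pow_le_pow_right₀ hb1.le hexp
    have heq2 : ((B:ℝ)⁻¹)^(n+2) = 1/((B:ℝ)^(n+2)) := by
      rw [inv_pow, one_div]
    rw [heq2]
    simp only [hfdef]
    apply one_div_le_one_div_of_le (by positivity)
    have := hxpos (n + (K+1))
    linarith
  have hTle : T ≤ 1 / ((B:ℝ) * ((B:ℝ) - 1)) := by
    have h1 : T ≤ ∑' n : ℕ, ((B:ℝ)⁻¹)^(n+2) := by
      apply Summable.tsum_le_tsum hterm _ hg
      exact (summable_nat_add_iff (K+1)).mpr hf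
    have h2 : ∑' n : ℕ, ((B:ℝ)⁻¹)^(n+2) = 1 / ((B:ℝ) * ((B:ℝ) - 1)) := by
      have hc : ∀ n : ℕ, ((B:ℝ)⁻¹)^(n+2) = ((B:ℝ)⁻¹)^2 * ((B:ℝ)⁻¹)^n := by
        intro n
        ring
      rw [tsum_congr hc, tsum_mul_left, tsum_geometric_of_lt_one hBinv0 hBinv1]
      have hB1R : (B:ℝ) - 1 ≠ 0 := by linarith
      have hBne : (B:ℝ) ≠ 0 := by linarith
      field_simp
    linarith
  -- main identity
  have hFK : ((B:ℝ) - 1) * f K = 1 - 2/((B:ℝ)+1) := by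
    simp only [hfdef]
    rw [← hBR]
    have h1 : ((B:ℝ)+1) ≠ 0 := by linarith
    field_simp
    ring
  have hqF : (q:ℝ) * (∑' n, f n) = (r.num : ℝ) := by
    rw [← hr, Rat.cast_def]
    have hd : ((r.den:ℝ)) ≠ 0 := by exact_mod_cast r.den_nz
    rw [hqdef]
    field_simp
  -- define the small positive number
  set y : ℝ := 2/((B:ℝ)+1) - ((B:ℝ)-1) * T with hydef
  have hBF : ((B:ℝ) - 1) * (∑' n, f n) = (S:ℝ) + 1 - y := by
    rw [hsplit, Finset.sum_range_succ, mul_add, mul_add, hS, hFK, hydef]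
    ring
  set z : ℤ := (q:ℤ) * ((S:ℤ) + 1) - r.num * ((B:ℤ) - 1) with hzdef
  have hzy : (z:ℝ) = (q:ℝ) * y := by
    have h1 : (q:ℝ) * y = (q:ℝ) * ((S:ℝ) + 1) - (q:ℝ) * (((B:ℝ) - 1) * (∑' n, f n)) := by
      rw [hBF]
      ring
    rw [h1]
    have h2 : (q:ℝ) * (((B:ℝ) - 1) * (∑' n, f n)) = (r.num:ℝ) * ((B:ℝ) - 1) := by
      rw [show (q:ℝ) * (((B:ℝ) - 1) * (∑' n, f n)) = ((q:ℝ) * (∑' n, f n)) * ((B:ℝ)-1) by ring,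
        hqF]
    rw [h2, hzdef]
    push_cast
    ring
  -- bounds on y
  have hy1 : 0 < y := by
    have h1 : ((B:ℝ)-1) * T ≤ 1/(B:ℝ) := by
      calc ((B:ℝ)-1) * T ≤ ((B:ℝ)-1) * (1 / ((B:ℝ) * ((B:ℝ) - 1))) := by
            apply mul_le_mul_of_nonneg_left hTle (by linarith)
        _ = 1/(B:ℝ) := by
            have hB1R : (B:ℝ) - 1 ≠ 0 := by linarith
            field_simp
    have h2 : 1/(B:ℝ) < 2/((B:ℝ)+1) := by
      rw [div_lt_div_iff₀ (by linarith) (by linarith)]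
      linarith
    rw [hydef]
    linarith
  have hy2 : y ≤ 2/((B:ℝ)+1) := by
    have h1 : 0 ≤ ((B:ℝ)-1) * T := mul_nonneg (by linarith) hT0
    rw [hydef]
    linarith
  -- contradiction
  have hz0 : 0 < (z:ℝ) := by
    rw [hzy]
    apply mul_pos _ hy1
    exact_mod_cast hq0
  have hz1 : (z:ℝ) < 1 := by
    rw [hzy]
    calc (q:ℝ) * y ≤ (q:ℝ) * (2/((B:ℝ)+1)) := by
          apply mul_le_mul_of_nonneg_left hy2 (by positivity)
      _ < 1 := by
          have hBp1 : (0:ℝ) < (B:ℝ)+1 := by linarith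
          rw [show (q:ℝ)*(2/((B:ℝ)+1)) = (2*(q:ℝ))/((B:ℝ)+1) by ring, div_lt_one hBp1]
          have h1 : (2*q + 2 : ℝ) ≤ (B:ℝ) := by exact_mod_cast hBq
          linarith
  have hz0' : 0 < z := by exact_mod_cast hz0
  have hz1' : z < 1 := by exact_mod_cast hz1
  omega
end
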